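/- The correspondence is inverse in the other direction: for a general coupled semiring C = ((A,∨,·,0,1),(A,∧,∗,1,0),α), applying the residuated-lattice construction and then the coupled-semiring construction recovers C; concretely, in the residuated lattice L(C) with x → y := α(x) ∗ y, one has ¬a = α(a) and a ⊕ b := ¬(¬a · ¬b) = a ∗ b for all a, b. -/
import Mathlib


/-- A general coupled semiring on a lattice `A`: two commutative semirings
`(A, ⊔, mul, zero, one)` and `(A, ⊓, star, one, zero)` together with an
involutive semiring isomorphism `α` from the first to the second, such that
`x ≤ y ↔ star (α x) y = one`. -/
structure GCS (A : Type*) [Lattice A] where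
  mul : A → A → A
  star : A → A → A
  zero : A
  one : A
  -- `(A, ⊔, mul, zero, one)` is a commutative semiring
  sup_zero : ∀ x : A, x ⊔ zero = x
  mul_comm : ∀ x y : A, mul x y = mul y x
  mul_assoc : ∀ x y z : A, mul (mul x y) z = mul x (mul y z)
  mul_one : ∀ x : A, mul x one = x
  mul_sup : ∀ x y z : A, mul x (y ⊔ z) = mul x y ⊔ mul x z
  mul_zero : ∀ x : A, mul x zero = zero
  -- `(A, ⊓, star, one, zero)` is a commutative semiring
  inf_one : ∀ x : A, x ⊓ one = x
  star_comm : ∀ x y : A, star x y = star y x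
  star_assoc : ∀ x y z : A, star (star x y) z = star x (star y z)
  star_zero : ∀ x : A, star x zero = x
  star_inf : ∀ x y z : A, star x (y ⊓ z) = star x y ⊓ star x z
  star_one : ∀ x : A, star x one = one
  -- `α` is an involutive semiring isomorphism from the first to the second
  α : A → A
  α_bij : Function.Bijective α
  α_sup : ∀ x y : A, α (x ⊔ y) = α x ⊓ α y
  α_mul : ∀ x y : A, α (mul x y) = star (α x) (α y)
  α_zero : α zero = one
  α_one : α one = zero
  α_invol : ∀ x : A, α (α x) = x
  -- coupling condition
  le_iff : ∀ x y : A, x ≤ y ↔ star (α x) y = one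

/-- Derived negation `¬x := (α x) ∗ 0`. -/
def GCS.neg {A : Type*} [Lattice A] (C : GCS A) (x : A) : A := C.star (C.α x) C.zero

/-- `C(L(C)) = C`: in the residuated lattice obtained from a general coupled
semiring, `¬a = α a` and `a ⊕ b := ¬(¬a · ¬b)` coincides with `a ∗ b`. -/
theorem stmt17 {A : Type*} [Lattice A] (C : GCS A) (a b : A) :
    C.neg a = C.α a ∧ C.neg (C.mul (C.neg a) (C.neg b)) = C.star a b := by
  constructor
  · simp [GCS.neg, C.star_zero]
  · simp [GCS.neg, C.star_zero, C.α_mul, C.α_invol]
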